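/- Let Φ : B(H_in) → B(H_out) be a quantum channel between full matrix algebras, let π_op : B(H_out)^op → B(\overline{H_out}) be the canonical faithful representation π_op(T)(\overline{ξ}) = \overline{T*ξ}, and set V = Range((id ⊗ π_op)(C_Φ)) ⊆ H_in ⊗ \overline{H_out}, where C_Φ is the Choi-type invariant of Φ. Then, under the canonical Hilbert-space isomorphism B(H_in) ⊗ B(\overline{H_out}) ≅ (H_in ⊗ \overline{H_out}) ⊗ \overline{(H_in ⊗ \overline{H_out})} (Hilbert–Schmidt inner products, vec/mat identifications and reshuffling of tensor factors), one has (id ⊗ π_op)(S̃_Φ) = V ⊗ \overline{V}. In particular (id ⊗ π_op)(S̃_Φ) is isomorphic as a vector space to V ⊗ \overline{V}. -/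

import Mathlib

/-!
STATEMENT 10: Let `Φ : B(H_in) → B(H_out)` be a quantum channel between full matrix
algebras, `π_op : B(H_out)^op → B(conj H_out)` the canonical representation
(`π_op(T) = Tᵀ` in coordinates), and `V = Range((id ⊗ π_op)(C_Φ)) ⊆ H_in ⊗ conj H_out`.
Then, under the canonical Hilbert-space identification
`B(H_in) ⊗ B(conj H_out) ≅ (H_in ⊗ conj H_out) ⊗ conj(H_in ⊗ conj H_out)`,
one has `(id ⊗ π_op)(S̃_Φ) = V ⊗ conj V`; i.e. `(id ⊗ π_op)(S̃_Φ)` is exactly the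
space of all operators on `H_in ⊗ conj H_out` whose range and whose adjoint's range
are contained in `V`.

Encoding: `B(H_in) ⊗ B(H_out)^op` acts faithfully on the module
`M_Φ = H_in ⊗ B(H_out)^op` (index `n × (m × m)`), the multigraph `S̃_Φ` is realised
there via the canonical Stinespring module `(M_Φ, √C_Φ)`, and `id ⊗ π_op` is the
entry-averaging map `piopSlice` which sends `A ⊗ R_y` to `A ⊗ₖ yᵀ`.
-/

open scoped ComplexOrder Kronecker Matrix

namespace Stmt10

open scoped Classical

variable {n m : Type} [Fintype n] [DecidableEq n] [Fintype m] [DecidableEq m]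

def toBig {k d : Type} (X : Matrix k k (Matrix d d ℂ)) : Matrix (k × d) (k × d) ℂ :=
  Matrix.of fun p q => X p.1 q.1 p.2 q.2

/-- Complete positivity for maps between full matrix algebras. -/
def IsCP (Φ : Matrix n n ℂ →ₗ[ℂ] Matrix m m ℂ) : Prop :=
  ∀ (k : ℕ) (X : Matrix (Fin k) (Fin k) (Matrix n n ℂ)),
    (toBig X).PosSemidef → (toBig (X.map ⇑Φ)).PosSemidef

/-- Right multiplication by `y` on the Hilbert–Schmidt space of `B(H_out)`. -/
def Rmat (y : Matrix m m ℂ) : Matrix (m × m) (m × m) ℂ :=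
  Matrix.of fun pq pq' => if pq.1 = pq'.1 then y pq'.2 pq.2 else 0

/-- Left multiplication by `y` on the Hilbert–Schmidt space of `B(H_out)`. -/
def Lmat (y : Matrix m m ℂ) : Matrix (m × m) (m × m) ℂ :=
  Matrix.of fun pq pq' => if pq.2 = pq'.2 then y pq.1 pq'.1 else 0

/-- The right `B(H_out)^op`-module action on `M_Φ = H_in ⊗ B(H_out)^op`. -/
def actOMat (x : Matrix m m ℂ) : Matrix (n × m × m) (n × m × m) ℂ :=
  (1 : Matrix n n ℂ) ⊗ₖ Lmat x

/-- The Choi-type invariant `C_Φ = Σ_{i,j} e_{ij} ⊗ Φ(e_{ji})` as an operator on the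
module `M_Φ`. -/
noncomputable def CMat (Φ : Matrix n n ℂ →ₗ[ℂ] Matrix m m ℂ) :
    Matrix (n × m × m) (n × m × m) ℂ :=
  ∑ i : n, ∑ j : n,
    Matrix.single i j (1 : ℂ) ⊗ₖ Rmat (Φ (Matrix.single j i 1))

/-- Positive-semidefinite square root (junk value `0` off the PSD cone). -/
noncomputable def psqrt {k : Type} [Fintype k] [DecidableEq k] (A : Matrix k k ℂ) :
    Matrix k k ℂ :=
  if h : A.PosSemidef then
    h.1.eigenvectorUnitary.1 * Matrix.diagonal ((↑) ∘ (√·) ∘ h.1.eigenvalues) *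
      (star h.1.eigenvectorUnitary : Matrix k k ℂ) else 0

/-- The quantum confusability multigraph `S̃_Φ` realised on the module `M_Φ` via the
canonical Stinespring module `(M_Φ, √C_Φ)`. -/
noncomputable def multigraph (Φ : Matrix n n ℂ →ₗ[ℂ] Matrix m m ℂ) :
    Set (Matrix (n × m × m) (n × m × m) ℂ) :=
  {S | ∃ T, (∀ x : Matrix m m ℂ, T * actOMat (n := n) x = actOMat (n := n) x * T) ∧
        S = psqrt (CMat Φ) * T * psqrt (CMat Φ)}

/-- The map `id ⊗ π_op` from operators on the module `M_Φ` (i.e. `B(H_in) ⊗ B(H_out)^op`)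
to operators on `H_in ⊗ conj H_out` (it sends `A ⊗ (right mult. by y)` to `A ⊗ₖ yᵀ`). -/
noncomputable def piopSlice (T : Matrix (n × m × m) (n × m × m) ℂ) :
    Matrix (n × m) (n × m) ℂ :=
  Matrix.of fun r c =>
    (Fintype.card m : ℂ)⁻¹ * ∑ p : m, T (r.1, (p, r.2)) (c.1, (p, c.2))


set_option linter.unusedSectionVars false
set_option maxHeartbeats 1000000

/-! ### Auxiliary machinery -/

def lift (t : Matrix (n × m) (n × m) ℂ) : Matrix (n × m × m) (n × m × m) ℂ :=
  Matrix.of fun r c => if r.2.1 = c.2.1 then t (r.1, r.2.2) (c.1, c.2.2) else 0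

lemma lift_apply (t : Matrix (n × m) (n × m) ℂ) (i : n) (p q : m) (j : n) (p' q' : m) :
    lift t (i,(p,q)) (j,(p',q')) = if p = p' then t (i,q) (j,q') else 0 := rfl

lemma lift_mul (a b : Matrix (n × m) (n × m) ℂ) : lift a * lift b = lift (a * b) := by
  ext ⟨i,p,q⟩ ⟨j,p',q'⟩
  simp only [Matrix.mul_apply, lift, Matrix.of_apply, Fintype.sum_prod_type]
  rw [Finset.sum_comm]
  simp [ite_mul, mul_ite, Finset.sum_ite_eq, Finset.mul_sum, Finset.sum_comm (γ := m)]

lemma lift_conjTranspose (t : Matrix (n × m) (n × m) ℂ) : (lift t)ᴴ = lift tᴴ := by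
  ext ⟨i,p,q⟩ ⟨j,p',q'⟩
  rcases eq_or_ne p p' with h|h
  · subst h; simp [lift, Matrix.conjTranspose_apply]
  · simp [lift, Matrix.conjTranspose_apply, h, h.symm]

lemma dot_lift (t : Matrix (n × m) (n × m) ℂ) (x : n × m × m → ℂ) :
    star x ⬝ᵥ (lift t) *ᵥ x
      = ∑ p : m, (star (fun r : n × m => x (r.1, (p, r.2)))
          ⬝ᵥ t *ᵥ (fun r : n × m => x (r.1, (p, r.2)))) := by
  simp only [dotProduct, Matrix.mulVec, Fintype.sum_prod_type, lift, Matrix.of_apply,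
    Pi.star_apply]
  rw [Finset.sum_comm]
  refine Finset.sum_congr rfl fun p _ => ?_
  refine Finset.sum_congr rfl fun i _ => ?_
  refine Finset.sum_congr rfl fun q _ => ?_
  congr 1
  simp only [ite_mul, mul_ite, zero_mul, mul_zero]
  rw [Finset.sum_comm]
  simp [Finset.sum_ite_eq]

lemma lift_posSemidef {t : Matrix (n × m) (n × m) ℂ} (ht : t.PosSemidef) :
    (lift t).PosSemidef := by
  refine Matrix.PosSemidef.of_dotProduct_mulVec_nonneg ?_ ?_
  · rw [Matrix.IsHermitian, lift_conjTranspose, ht.1]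
  · intro x
    rw [dot_lift]
    exact Finset.sum_nonneg fun p _ => ht.dotProduct_mulVec_nonneg _

/-- The Choi matrix of `Φ` on `H_in ⊗ conj H_out`. -/
noncomputable def choi (Φ : Matrix n n ℂ →ₗ[ℂ] Matrix m m ℂ) : Matrix (n × m) (n × m) ℂ :=
  Matrix.of fun r c => Φ (Matrix.single c.1 r.1 1) c.2 r.2

lemma CMat_eq (Φ : Matrix n n ℂ →ₗ[ℂ] Matrix m m ℂ) : CMat Φ = lift (choi Φ) := by
  ext ⟨i,p,q⟩ ⟨j,p',q'⟩
  simp only [CMat, Matrix.sum_apply, Matrix.kroneckerMap_apply, Matrix.single,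
    Matrix.of_apply, lift, choi, Rmat, ite_and, ite_mul, one_mul, zero_mul,
    Finset.sum_ite_eq, Finset.mem_univ, if_true]
  simp [Finset.sum_ite_eq']

lemma piopSlice_lift [Nonempty m] (t : Matrix (n × m) (n × m) ℂ) :
    piopSlice (lift t) = t := by
  ext ⟨i,q⟩ ⟨j,q'⟩
  have hm : (Fintype.card m : ℂ) ≠ 0 := Nat.cast_ne_zero.mpr Fintype.card_ne_zero
  simp only [piopSlice, Matrix.of_apply]
  have hent : ∀ p : m, lift t ((i,q).1, (p, (i,q).2)) ((j,q').1, (p, (j,q').2))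
      = t (i,q) (j,q') := fun p => by simp [lift]
  rw [Finset.sum_congr rfl (fun p _ => hent p), Finset.sum_const, Finset.card_univ,
    nsmul_eq_mul, ← mul_assoc, inv_mul_cancel₀ hm, one_mul]

lemma choi_posSemidef (Φ : Matrix n n ℂ →ₗ[ℂ] Matrix m m ℂ) (hCP : IsCP Φ) :
    (choi Φ).PosSemidef := by
  set k := Fintype.card n with hk
  set σ : Fin k ≃ n := (Fintype.equivFin n).symm with hσ
  set X : Matrix (Fin k) (Fin k) (Matrix n n ℂ) :=
    fun a b => Matrix.single (σ a) (σ b) 1 with hX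
  set v : Fin k × n → ℂ := fun p => if σ p.1 = p.2 then 1 else 0 with hv
  have hvstar : ∀ p, star (v p) = v p := by
    intro p; by_cases h : σ p.1 = p.2 <;> simp [hv, h]
  have hXent : ∀ a (q : n) b q', toBig X (a, q) (b, q') = v (a, q) * v (b, q') := by
    intro a q b q'
    simp only [toBig, hX, Matrix.of_apply, Matrix.single, hv, ite_and]
    simp only [ite_mul, mul_ite, one_mul, mul_one, zero_mul, mul_zero]
    split_ifs <;> rfl
  have hXpsd : (toBig X).PosSemidef := by
    refine Matrix.PosSemidef.of_dotProduct_mulVec_nonneg ?_ ?_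
    · ext ⟨a,q⟩ ⟨b,q'⟩
      rw [Matrix.conjTranspose_apply, hXent, hXent]
      rw [star_mul', hvstar, hvstar, mul_comm]
    · intro x
      have : star x ⬝ᵥ (toBig X) *ᵥ x
          = star (∑ p, v p * x p) * (∑ p, v p * x p) := by
        simp only [dotProduct, Matrix.mulVec, Pi.star_apply]
        rw [star_sum, Finset.sum_mul]
        refine Fintype.sum_congr _ _ fun p => ?_
        rw [Finset.mul_sum, Finset.mul_sum]
        refine Fintype.sum_congr _ _ fun r => ?_
        rw [hXent p.1 p.2 r.1 r.2]
        rw [star_mul', hvstar]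
        ring
      rw [this]
      exact star_mul_self_nonneg _
  have hJ := hCP k X hXpsd
  have : choi Φ = ((toBig (X.map ⇑Φ)).submatrix
      (fun r : n × m => (σ.symm r.1, r.2)) (fun r : n × m => (σ.symm r.1, r.2)))ᵀ := by
    ext ⟨i,q⟩ ⟨j,q'⟩
    simp [choi, toBig, hX, Matrix.submatrix_apply, Matrix.map_apply]
    simp [Matrix.map]
  rw [this]
  exact (hJ.submatrix _).transpose

lemma actOMat_apply (x : Matrix m m ℂ) (i : n) (p q : m) (j : n) (p' q' : m) :
    actOMat (n := n) x (i,(p,q)) (j,(p',q'))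
      = (if i = j then 1 else 0) * (if q = q' then x p p' else 0) := by
  simp [actOMat, Lmat, Matrix.one_apply]

lemma commute_lift (t : Matrix (n × m) (n × m) ℂ) (x : Matrix m m ℂ) :
    lift t * actOMat (n := n) x = actOMat (n := n) x * lift t := by
  ext ⟨i,p,q⟩ ⟨j,p',q'⟩
  simp only [Matrix.mul_apply, Fintype.sum_prod_type, lift, Matrix.of_apply, actOMat_apply]
  simp only [ite_mul, mul_ite, zero_mul, mul_zero, one_mul, mul_one]
  simp [Finset.sum_ite_eq, Finset.sum_ite_eq']
  ring

lemma eq_lift_of_commute [Nonempty m] (T : Matrix (n × m × m) (n × m × m) ℂ)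
    (h : ∀ x : Matrix m m ℂ, T * actOMat (n := n) x = actOMat (n := n) x * T) :
    ∃ t, T = lift t := by
  classical
  set p₀ : m := Classical.arbitrary m with hp₀
  refine ⟨Matrix.of fun r c => T (r.1, (p₀, r.2)) (c.1, (p₀, c.2)), ?_⟩
  have key : ∀ (a b : m) (i : n) (p q : m) (j : n) (p' q' : m),
      (if b = p' then T (i,(p,q)) (j,(a,q')) else 0)
        = (if a = p then T (i,(b,q)) (j,(p',q')) else 0) := by
    intro a b i p q j p' q'
    have hh := congrFun (congrFun (h (Matrix.single a b 1)) (i,(p,q))) (j,(p',q'))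
    simp only [Matrix.mul_apply, Fintype.sum_prod_type, actOMat_apply,
      Matrix.single, Matrix.of_apply, ite_and] at hh
    simp only [ite_mul, mul_ite, zero_mul, mul_zero, one_mul, mul_one] at hh
    simp only [Finset.sum_ite_eq, Finset.sum_ite_eq', Finset.mem_univ, if_true] at hh
    by_cases hb : b = p' <;> by_cases ha : a = p <;>
      simp [hb, ha, Finset.sum_ite_eq, Finset.sum_ite_eq'] at hh ⊢ <;> simp_all
  ext ⟨i,p,q⟩ ⟨j,p',q'⟩
  rw [lift_apply, Matrix.of_apply]
  rcases eq_or_ne p p' with rfl|hne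
  · rw [if_pos rfl]
    have := key p p₀ i p q j p₀ q'
    simpa using this
  · rw [if_neg hne]
    have := key p' p' i p q j p' q'
    rw [if_pos rfl, if_neg (fun hh : p' = p => hne hh.symm)] at this
    exact this

/-- Pseudo-inverse facts for a Hermitian matrix. -/
lemma exists_pinv {k : Type} [Fintype k] [DecidableEq k] {A : Matrix k k ℂ}
    (hA : A.IsHermitian) : ∃ g, A * g * A = A ∧ A * g = g * A := by
  set U : Matrix k k ℂ := (hA.eigenvectorUnitary : Matrix k k ℂ) with hU
  have hU2 : star U * U = 1 := Matrix.mem_unitaryGroup_iff'.mp hA.eigenvectorUnitary.2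
  set d : k → ℂ := RCLike.ofReal ∘ hA.eigenvalues with hd
  set e : k → ℂ := fun i => if hA.eigenvalues i = 0 then 0 else (d i)⁻¹ with he
  have conj_mul : ∀ f f' : k → ℂ,
      (U * Matrix.diagonal f * star U) * (U * Matrix.diagonal f' * star U)
        = U * Matrix.diagonal (f * f') * star U := by
    intro f f'
    rw [Matrix.mul_assoc, Matrix.mul_assoc, ← Matrix.mul_assoc (star U),
      ← Matrix.mul_assoc (star U), hU2, Matrix.one_mul, ← Matrix.mul_assoc,
      ← Matrix.mul_assoc, Matrix.mul_assoc U, Matrix.diagonal_mul_diagonal]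
    rfl
  have hAspec : A = U * Matrix.diagonal d * star U := hA.spectral_theorem
  refine ⟨U * Matrix.diagonal e * star U, ?_, ?_⟩
  · have hded : d * e * d = d := by
      funext i
      by_cases hz : hA.eigenvalues i = 0
      · simp [he, hd, hz]
      · have hd0 : d i ≠ 0 := by
          simp only [hd, Function.comp_apply, ne_eq, RCLike.ofReal_eq_zero]
          exact hz
        simp only [Pi.mul_apply, he, if_neg hz]
        field_simp
    conv_lhs => rw [hAspec]
    rw [conj_mul, conj_mul, hded, ← hAspec]
  · conv_lhs => rw [hAspec]
    conv_rhs => rw [hAspec]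
    rw [conj_mul, conj_mul, mul_comm d e]

lemma range_mul_le {k : Type} [Fintype k] [DecidableEq k] (A B : Matrix k k ℂ) :
    LinearMap.range ((A * B).mulVecLin) ≤ LinearMap.range (A.mulVecLin) := by
  rw [Matrix.mulVecLin_mul]
  exact LinearMap.range_comp_le_range _ _

lemma exists_factor {k : Type} [Fintype k] [DecidableEq k] {A B : Matrix k k ℂ}
    (h : LinearMap.range B.mulVecLin ≤ LinearMap.range A.mulVecLin) :
    ∃ C, B = A * C := by
  have hmem : ∀ j, B.mulVecLin (Pi.single j 1) ∈ LinearMap.range A.mulVecLin :=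
    fun j => h (LinearMap.mem_range_self _ _)
  choose f hf using hmem
  refine ⟨Matrix.of fun i j => f j i, ?_⟩
  ext i j
  have := congrFun (hf j) i
  simp only [Matrix.mulVecLin_apply, Matrix.mulVec, dotProduct] at this
  simp only [Matrix.mul_apply, Matrix.of_apply]
  rw [this]
  simp [Pi.single_apply, mul_ite, Finset.sum_ite_eq']
lemma psqrt_eq_cfc {k : Type} [Fintype k] [DecidableEq k] {A : Matrix k k ℂ}
    (h : A.PosSemidef) : psqrt A = cfc Real.sqrt A := by
  rw [h.1.cfc_eq, Matrix.IsHermitian.cfc, Unitary.conjStarAlgAut_apply]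
  unfold psqrt
  rw [dif_pos h]
  rfl

lemma psqrt_mul_self {k : Type} [Fintype k] [DecidableEq k] {A : Matrix k k ℂ}
    (h : A.PosSemidef) : psqrt A * psqrt A = A := by
  rw [psqrt_eq_cfc h, ← cfc_mul Real.sqrt Real.sqrt A]
  conv_rhs => rw [← cfc_id' ℝ A (ha := h.1)]
  refine cfc_congr fun x hx => ?_
  have : 0 ≤ x := by
    rw [h.1.spectrum_real_eq_range_eigenvalues] at hx
    obtain ⟨i, rfl⟩ := hx
    exact h.eigenvalues_nonneg i
  exact Real.mul_self_sqrt this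

lemma psqrt_isHermitian {k : Type} [Fintype k] [DecidableEq k] {A : Matrix k k ℂ}
    (h : A.PosSemidef) : (psqrt A).IsHermitian := by
  rw [psqrt_eq_cfc h]
  exact (cfc_predicate Real.sqrt A : IsSelfAdjoint _).isHermitian

lemma psqrt_commute {k : Type} [Fintype k] [DecidableEq k] {A B : Matrix k k ℂ}
    (h : A.PosSemidef) (hb : Commute A B) : Commute (psqrt A) B := by
  rw [psqrt_eq_cfc h]
  exact hb.cfc_real Real.sqrt

theorem stmt10 (Φ : Matrix n n ℂ →ₗ[ℂ] Matrix m m ℂ) (hCP : IsCP Φ)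
    (hTP : ∀ x, (Φ x).trace = x.trace) :
    {T : Matrix (n × m) (n × m) ℂ | ∃ S ∈ multigraph Φ, T = piopSlice S}
      = {T : Matrix (n × m) (n × m) ℂ |
          LinearMap.range (Matrix.mulVecLin T)
              ≤ LinearMap.range (Matrix.mulVecLin (piopSlice (CMat Φ))) ∧
          LinearMap.range (Matrix.mulVecLin Tᴴ)
              ≤ LinearMap.range (Matrix.mulVecLin (piopSlice (CMat Φ)))} := by
  classical
  by_cases hm : Nonempty m
  · haveI := hm
    have hchoi : (choi Φ).PosSemidef := choi_posSemidef Φ hCP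
    have hCpsd : (CMat Φ).PosSemidef := by
      rw [CMat_eq]; exact lift_posSemidef hchoi
    obtain ⟨s, hps⟩ := eq_lift_of_commute (psqrt (CMat Φ)) (fun x =>
      (psqrt_commute hCpsd (by rw [CMat_eq]; exact commute_lift (choi Φ) x)).eq)
    have hs : s.IsHermitian := by
      have h := psqrt_isHermitian hCpsd
      rw [hps, Matrix.IsHermitian, lift_conjTranspose] at h
      have := congrArg piopSlice h
      rwa [piopSlice_lift, piopSlice_lift] at this
    have hss : s * s = choi Φ := by
      have h := psqrt_mul_self hCpsd
      rw [hps, lift_mul, CMat_eq] at h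
      have := congrArg piopSlice h
      rwa [piopSlice_lift, piopSlice_lift] at this
    obtain ⟨g, hg1, hg2⟩ := exists_pinv hs
    have k1 : s * s * g = s := by rw [mul_assoc, hg2, ← mul_assoc, hg1]
    have k2 : s * g * (s * s) = s * s := by rw [← mul_assoc, hg1]
    have k3 : s * s * (g * s) = s * s := by rw [← mul_assoc, k1]
    have hslice : piopSlice (CMat Φ) = choi Φ := by rw [CMat_eq, piopSlice_lift]
    ext T
    simp only [Set.mem_setOf_eq, hslice]
    constructor
    · rintro ⟨S, ⟨T', hcomm, rfl⟩, rfl⟩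
      obtain ⟨t, rfl⟩ := eq_lift_of_commute T' hcomm
      rw [hps, lift_mul, lift_mul, piopSlice_lift]
      have hfac : s * t * s = choi Φ * (g * (t * s)) := by
        rw [← hss, ← mul_assoc (s * s) g (t * s), k1, ← mul_assoc]
      have hfacH : (s * t * s)ᴴ = choi Φ * (g * (tᴴ * s)) := by
        rw [Matrix.conjTranspose_mul, Matrix.conjTranspose_mul, hs, ← hss,
          ← mul_assoc (s * s) g (tᴴ * s), k1]
      constructor
      · rw [hfac]; exact range_mul_le _ _
      · rw [hfacH]; exact range_mul_le _ _
    · rintro ⟨h1, h2⟩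
      obtain ⟨A, hA⟩ := exists_factor h1
      obtain ⟨B, hB⟩ := exists_factor h2
      have hTB : T = Bᴴ * choi Φ := by
        calc T = Tᴴᴴ := (Matrix.conjTranspose_conjTranspose T).symm
        _ = (choi Φ * B)ᴴ := by rw [← hB]
        _ = Bᴴ * choi Φ := by rw [Matrix.conjTranspose_mul, hchoi.1]
      refine ⟨psqrt (CMat Φ) * lift (g * T * g) * psqrt (CMat Φ),
        ⟨lift (g * T * g), fun x => commute_lift _ _, rfl⟩, ?_⟩
      rw [hps, lift_mul, lift_mul, piopSlice_lift]
      have e1 : s * g * T = T := by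
        rw [hA, ← hss, ← mul_assoc (s * g) (s * s) A, k2]
      have e2 : T * (g * s) = T := by
        rw [hTB, ← hss, mul_assoc Bᴴ (s * s) (g * s), k3]
      calc T = s * g * T * (g * s) := by rw [e1, e2]
      _ = s * (g * T * g) * s := by simp only [mul_assoc]
  · haveI : IsEmpty m := not_nonempty_iff.mp hm
    haveI : IsEmpty (n × m) := ⟨fun x => IsEmpty.false x.2⟩
    haveI : Subsingleton (Matrix (n × m) (n × m) ℂ) :=
      ⟨fun a b => by ext x y; exact isEmptyElim x⟩
    ext T
    simp only [Set.mem_setOf_eq]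
    constructor
    · rintro -
      constructor <;>
        · rintro x -
          have : x = 0 := Subsingleton.elim x 0
          rw [this]
          exact Submodule.zero_mem _
    · rintro -
      exact ⟨psqrt (CMat Φ) * 0 * psqrt (CMat Φ),
        ⟨0, fun x => by simp, rfl⟩, Subsingleton.elim _ _⟩

end Stmt10
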